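/- In a binary reticulation-visible network, no parent of a reticulation is itself a reticulation; equivalently, every parent of a reticulation is the root or a tree vertex. -/

import Mathlib

/-!
Common framework: a binary phylogenetic network is modelled as a directed graph
on an ambient type `V`, given by a vertex set `verts : Set V`, an adjacency
relation `adj : V → V → Prop` (no parallel edges are possible in this model),
and a root vertex `root`.
-/

/-- The outdegree of a vertex `v`: the number of its out-neighbours. -/
noncomputable def outdeg {V : Type*} (adj : V → V → Prop) (v : V) : ℕ :=
  {u | adj v u}.ncard

/-- The indegree of a vertex `v`: the number of its in-neighbours. -/
noncomputable def indeg {V : Type*} (adj : V → V → Prop) (v : V) : ℕ :=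
  {u | adj u v}.ncard

/-- A leaf of the network: a vertex with outdegree 0. -/
def IsLeaf {V : Type*} (verts : Set V) (adj : V → V → Prop) (v : V) : Prop :=
  v ∈ verts ∧ outdeg adj v = 0

/-- A tree vertex: indegree 1 and outdegree 2. -/
def IsTreeVertex {V : Type*} (adj : V → V → Prop) (v : V) : Prop :=
  indeg adj v = 1 ∧ outdeg adj v = 2

/-- A reticulation: indegree 2 and outdegree 1. -/
def IsReticulation {V : Type*} (adj : V → V → Prop) (v : V) : Prop :=
  indeg adj v = 2 ∧ outdeg adj v = 1

/-- `l` is a directed path from `a` to `b`: a nonempty list of vertices starting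
at `a`, ending at `b`, each consecutive pair joined by an edge. -/
def IsPathFromTo {V : Type*} (adj : V → V → Prop) (l : List V) (a b : V) : Prop :=
  l.Chain' adj ∧ l.head? = some a ∧ l.getLast? = some b

/-- A binary phylogenetic network: a finite DAG with a unique root (the only
vertex of indegree 0) of outdegree 2, in which every vertex is reachable from
the root, every leaf has indegree 1, and every other non-root vertex is either
a tree vertex or a reticulation. -/
structure IsBinaryNetwork {V : Type*} (verts : Set V) (adj : V → V → Prop) (root : V) : Prop where
  finite_verts : verts.Finite
  root_mem : root ∈ verts
  adj_mem : ∀ ⦃u v : V⦄, adj u v → u ∈ verts ∧ v ∈ verts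
  acyclic : ∀ v : V, ¬ Relation.TransGen adj v v
  root_indeg : indeg adj root = 0
  root_outdeg : outdeg adj root = 2
  root_unique : ∀ v ∈ verts, indeg adj v = 0 → v = root
  reach : ∀ v ∈ verts, Relation.ReflTransGen adj root v
  leaf_indeg : ∀ v ∈ verts, outdeg adj v = 0 → indeg adj v = 1
  internal_deg : ∀ v ∈ verts, v ≠ root → outdeg adj v ≠ 0 →
      IsTreeVertex adj v ∨ IsReticulation adj v

/-- `x` is stable: there is a leaf `ℓ` such that `x` lies on every directed
path from the root to `ℓ`. -/
def Stable {V : Type*} (verts : Set V) (adj : V → V → Prop) (root x : V) : Prop :=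
  ∃ ℓ, IsLeaf verts adj ℓ ∧ ∀ l : List V, IsPathFromTo adj l root ℓ → x ∈ l

/-- A network is reticulation-visible if every reticulation is stable. -/
def ReticulationVisible {V : Type*} (verts : Set V) (adj : V → V → Prop) (root : V) : Prop :=
  ∀ v ∈ verts, IsReticulation adj v → Stable verts adj root v

/-- A network is nearly stable if every vertex is stable or all of its parents
are stable. -/
def NearlyStable {V : Type*} (verts : Set V) (adj : V → V → Prop) (root : V) : Prop :=
  ∀ v ∈ verts, Stable verts adj root v ∨ ∀ p : V, adj p v → Stable verts adj root p

/-!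
Suppose the parent `p` of the reticulation `r` were itself a reticulation. Then `p` is stable,
say for the leaf `ℓ`, and its only child is `r`, so every path from `p` to `ℓ` runs through `r`.
Let `q ≠ p` be the other parent of `r`. The path root → `q` → `r` → `ℓ` must contain `p`:
on the segment before `q` this gives a cycle `r →⁺ q → r`, on the segment after `r` a cycle
`r →* p → r`. Once `p` is not a reticulation, binarity leaves only the root or a tree vertex.
-/

section Paths

variable {V : Type*} {adj : V → V → Prop}

theorem IsPathFromTo.append {l₁ l₂ : List V} {a b c d : V} (h₁ : IsPathFromTo adj l₁ a b)
    (h₂ : IsPathFromTo adj l₂ c d) (hbc : adj b c) : IsPathFromTo adj (l₁ ++ l₂) a d := by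
  obtain ⟨c₁, hd₁, hl₁⟩ := h₁
  obtain ⟨c₂, hd₂, hl₂⟩ := h₂
  refine ⟨c₁.append c₂ ?_, ?_, ?_⟩
  · intro x hx y hy
    simp_all
  · rw [List.head?_append, hd₁]; rfl
  · rw [List.getLast?_append, hl₂]; rfl

theorem exists_isPathFromTo_of_reflTransGen {a b : V} (h : Relation.ReflTransGen adj a b) :
    ∃ l, IsPathFromTo adj l a b := by
  obtain ⟨l, hne, hc, hd, hl⟩ := List.exists_isChain_ne_nil_of_relationReflTransGen h
  exact ⟨l, hc, hd ▸ List.head?_eq_some_head hne, hl ▸ List.getLast?_eq_some_getLast hne⟩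

theorem IsPathFromTo.reflTransGen_of_mem {l : List V} {a b x : V}
    (hl : IsPathFromTo adj l a b) (hx : x ∈ l) :
    Relation.ReflTransGen adj a x ∧ Relation.ReflTransGen adj x b := by
  obtain ⟨hc, hd, hlast⟩ := hl
  refine ⟨hc.induction (Relation.ReflTransGen adj a ·) l (fun _ _ hxy h ↦ h.tail hxy)
      (fun _ ↦ List.head_of_head?_eq_some hd ▸ .refl) x hx,
    hc.backwards_induction (Relation.ReflTransGen adj · b) l (fun _ _ hxy h ↦ h.head hxy)
      (fun _ ↦ List.getLast_of_getLast?_eq_some hlast ▸ .refl) x hx⟩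

theorem Relation.ReflTransGen.of_unique_successor {a b x : V} (hb : ∀ y, adj a y → y = b)
    (h : Relation.ReflTransGen adj a x) (hax : a ≠ x) : Relation.ReflTransGen adj b x := by
  rcases h.cases_head with rfl | ⟨c, hac, hcx⟩
  · exact absurd rfl hax
  · exact hb c hac ▸ hcx

end Paths

section Degrees

variable {V : Type*} {adj : V → V → Prop}

theorem eq_of_adj_of_outdeg_eq_one {p r u : V} (h : outdeg adj p = 1) (hpr : adj p r)
    (hpu : adj p u) : u = r := by
  obtain ⟨a, ha⟩ := Set.ncard_eq_one.mp h
  have hr : r ∈ ({a} : Set V) := ha ▸ hpr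
  have hu : u ∈ ({a} : Set V) := ha ▸ hpu
  exact hu.trans hr.symm

theorem exists_adj_ne_of_indeg_eq_two {r : V} (h : indeg adj r = 2) (p : V) :
    ∃ q, adj q r ∧ q ≠ p :=
  Set.exists_ne_of_one_lt_ncard (h.symm ▸ one_lt_two : 1 < indeg adj r) p

end Degrees

namespace IsBinaryNetwork

variable {V : Type*} {verts : Set V} {adj : V → V → Prop} {root : V}

theorem outdeg_ne_zero_of_adj (hN : IsBinaryNetwork verts adj root) {p r : V} (hpr : adj p r) :
    outdeg adj p ≠ 0 := by
  have hfin : {u | adj p u}.Finite := hN.finite_verts.subset fun _ hu ↦ (hN.adj_mem hu).2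
  exact (Set.ncard_pos hfin).mpr ⟨r, hpr⟩ |>.ne'

theorem eq_of_adj_of_stable_of_outdeg_eq_one (hN : IsBinaryNetwork verts adj root)
    {p q r : V} (hp : Stable verts adj root p) (hout : outdeg adj p = 1) (hpr : adj p r)
    (hqr : adj q r) : q = p := by
  obtain ⟨ℓ, hℓ, hstab⟩ := hp
  have hchild : ∀ u, adj p u → u = r := fun _ ↦ eq_of_adj_of_outdeg_eq_one hout hpr
  have hpℓ : p ≠ ℓ := by
    rintro rfl
    simp [hℓ.2] at hout
  have hrℓ : Relation.ReflTransGen adj r ℓ := by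
    obtain ⟨l, hl⟩ := exists_isPathFromTo_of_reflTransGen (hN.reach ℓ hℓ.1)
    exact ((hl.reflTransGen_of_mem (hstab l hl)).2).of_unique_successor hchild hpℓ
  by_contra hqp
  obtain ⟨l₁, hl₁⟩ := exists_isPathFromTo_of_reflTransGen (hN.reach q (hN.adj_mem hqr).1)
  obtain ⟨l₂, hl₂⟩ := exists_isPathFromTo_of_reflTransGen hrℓ
  rcases List.mem_append.mp (hstab _ (hl₁.append hl₂ hqr)) with hp₁ | hp₂
  · have hrq := (hl₁.reflTransGen_of_mem hp₁).2.of_unique_successor hchild (Ne.symm hqp)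
    exact hN.acyclic r (.tail' hrq hqr)
  · exact hN.acyclic r (.tail' (hl₂.reflTransGen_of_mem hp₂).1 hpr)

end IsBinaryNetwork

/-- In a binary reticulation-visible network, no parent of a reticulation is
itself a reticulation; equivalently, every parent of a reticulation is the
root or a tree vertex. -/
theorem parent_of_reticulation_not_reticulation {V : Type*} (verts : Set V)
    (adj : V → V → Prop) (root : V) (hN : IsBinaryNetwork verts adj root)
    (hRV : ReticulationVisible verts adj root)
    (p r : V) (hpr : adj p r) (hr : IsReticulation adj r) :
    ¬ IsReticulation adj p ∧ (p = root ∨ IsTreeVertex adj p) := by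
  have hpv : p ∈ verts := (hN.adj_mem hpr).1
  have hnot : ¬ IsReticulation adj p := fun hp ↦ by
    obtain ⟨q, hqr, hqp⟩ := exists_adj_ne_of_indeg_eq_two hr.1 p
    exact hqp (hN.eq_of_adj_of_stable_of_outdeg_eq_one (hRV p hpv hp) hp.2 hpr hqr)
  refine ⟨hnot, or_iff_not_imp_left.mpr fun hroot ↦ ?_⟩
  exact (hN.internal_deg p hpv hroot (hN.outdeg_ne_zero_of_adj hpr)).resolve_right hnot
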